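/- Let φ be a strategy-proof voting rule on [m,M]^n that is voter-sovereign (surjective onto [m,M]). Then φ is unanimous and Pareto-bounded: for all profiles r, min_i r_i ≤ φ(r) ≤ max_i r_i. -/

import Mathlib

/-!
Changing one ballot of a strategy-proof rule moves the outcome only within the interval spanned
by the old outcome and the new ballot. Hence if the outcome at some profile and every ballot of a
second profile lie in an interval `[a, b]`, so does the outcome at the second profile: reach it
by replacing the ballots one at a time. Voter sovereignty provides a starting profile with any
prescribed outcome, in particular one of the ballots, or the common ballot of a unanimous profile.
-/

open Function

theorem Fintype.induction_update {ι α : Type*} [Fintype ι] [DecidableEq ι] {P : (ι → α) → Prop}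
    {p q : ι → α} (hp : P p) (step : ∀ r i, P r → P (update r i (q i))) : P q := by
  have key : ∀ T : Finset ι, P (T.piecewise q p) := by
    intro T
    induction T using Finset.induction_on with
    | empty => simpa using hp
    | insert i T _ ih => simpa only [Finset.piecewise_insert] using step _ i ih
  simpa using key Finset.univ

section StrategyProof

variable {ι α : Type*} [LinearOrder α]

def IsStrategyProof (S : Set α) (φ : (ι → α) → α) : Prop :=
  ∀ r s : ι → α, (∀ j, r j ∈ S) → (∀ j, s j ∈ S) → ∀ i : ι, (∀ j, j ≠ i → s j = r j) →
    (φ s ≥ φ r ∧ φ r ≥ r i) ∨ (φ s ≤ φ r ∧ φ r ≤ r i)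

variable {S : Set α} {φ : (ι → α) → α}

theorem IsStrategyProof.apply_update_mem_uIcc [DecidableEq ι] (hφ : IsStrategyProof S φ)
    {r : ι → α} (hr : ∀ j, r j ∈ S) (i : ι) {x : α} (hx : x ∈ S) :
    φ (update r i x) ∈ Set.uIcc (φ r) x := by
  have hs : ∀ j, update r i x j ∈ S :=
    (forall_update_iff r fun _ y => y ∈ S).mpr ⟨hx, fun j _ => hr j⟩
  -- the voter whose true ballot is `x` must not gain by reporting `r i` instead
  rcases hφ (update r i x) r hs hr i (fun j hj => (update_of_ne hj x r).symm) with
    ⟨hle, hge⟩ | ⟨hge, hle⟩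
  · simp only [update_self] at hge
    exact Set.mem_uIcc.mpr (Or.inr ⟨hge, hle⟩)
  · simp only [update_self] at hle
    exact Set.mem_uIcc.mpr (Or.inl ⟨hge, hle⟩)

theorem IsStrategyProof.apply_mem_Icc [Fintype ι] (hφ : IsStrategyProof S φ) {p q : ι → α}
    (hp : ∀ j, p j ∈ S) (hq : ∀ j, q j ∈ S) {a b : α} (hφp : φ p ∈ Set.Icc a b)
    (hqab : ∀ j, q j ∈ Set.Icc a b) : φ q ∈ Set.Icc a b := by
  classical
  refine (Fintype.induction_update (P := fun r => (∀ j, r j ∈ S) ∧ φ r ∈ Set.Icc a b)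
    ⟨hp, hφp⟩ ?_).2
  rintro r i ⟨hr, hφr⟩
  exact ⟨(forall_update_iff r fun _ y => y ∈ S).mpr ⟨hq i, fun j _ => hr j⟩,
    Set.uIcc_subset_Icc hφr (hqab i) (hφ.apply_update_mem_uIcc hr i (hq i))⟩

end StrategyProof

theorem sp_sovereign_pareto_general (m M : ℝ) (n : ℕ) (hn : 0 < n)
    (φ : (Fin n → ℝ) → ℝ)
    (hSP : ∀ r s : Fin n → ℝ,
      (∀ j, r j ∈ Set.Icc m M) → (∀ j, s j ∈ Set.Icc m M) →
      ∀ i : Fin n, (∀ j, j ≠ i → s j = r j) →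
      (φ s ≥ φ r ∧ φ r ≥ r i) ∨ (φ s ≤ φ r ∧ φ r ≤ r i))
    (hsov : ∀ x ∈ Set.Icc m M, ∃ r : Fin n → ℝ, (∀ j, r j ∈ Set.Icc m M) ∧ φ r = x) :
    (∀ a ∈ Set.Icc m M, φ (fun _ => a) = a) ∧
    (∀ r : Fin n → ℝ, (∀ j, r j ∈ Set.Icc m M) →
      Finset.univ.inf' (Finset.univ_nonempty_iff.mpr ⟨⟨0, hn⟩⟩) r ≤ φ r ∧
      φ r ≤ Finset.univ.sup' (Finset.univ_nonempty_iff.mpr ⟨⟨0, hn⟩⟩) r) := by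
  have hφ : IsStrategyProof (Set.Icc m M) φ := hSP
  constructor
  · intro a ha
    obtain ⟨p, hp, hφp⟩ := hsov a ha
    have hunanimous : φ (fun _ => a) ∈ Set.Icc a a :=
      hφ.apply_mem_Icc hp (fun _ => ha) (by simp [hφp]) (fun _ => by simp)
    simpa using hunanimous
  · intro r hr
    have hbounds : ∀ j, r j ∈ Set.Icc (Finset.univ.inf' _ r) (Finset.univ.sup' _ r) :=
      fun j => ⟨Finset.inf'_le r (Finset.mem_univ j), Finset.le_sup' r (Finset.mem_univ j)⟩
    obtain ⟨p, hp, hφp⟩ := hsov (r ⟨0, hn⟩) (hr _)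
    exact hφ.apply_mem_Icc hp hr (hφp ▸ hbounds _) hbounds

/-- a voter-sovereign strategy-proof rule on `[m,M]^n` is unanimous and
Pareto-bounded between the smallest and largest ballots. -/
theorem sp_sovereign_pareto (m M : ℝ) (hmM : m ≤ M) (n : ℕ) (hn : 0 < n)
    (φ : (Fin n → ℝ) → ℝ)
    (hrange : ∀ r : Fin n → ℝ, (∀ j, r j ∈ Set.Icc m M) → φ r ∈ Set.Icc m M)
    (hSP : ∀ r s : Fin n → ℝ,
      (∀ j, r j ∈ Set.Icc m M) → (∀ j, s j ∈ Set.Icc m M) →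
      ∀ i : Fin n, (∀ j, j ≠ i → s j = r j) →
      (φ s ≥ φ r ∧ φ r ≥ r i) ∨ (φ s ≤ φ r ∧ φ r ≤ r i))
    (hsov : ∀ x ∈ Set.Icc m M, ∃ r : Fin n → ℝ, (∀ j, r j ∈ Set.Icc m M) ∧ φ r = x) :
    (∀ a ∈ Set.Icc m M, φ (fun _ => a) = a) ∧
    (∀ r : Fin n → ℝ, (∀ j, r j ∈ Set.Icc m M) →
      Finset.univ.inf' (Finset.univ_nonempty_iff.mpr ⟨⟨0, hn⟩⟩) r ≤ φ r ∧
      φ r ≤ Finset.univ.sup' (Finset.univ_nonempty_iff.mpr ⟨⟨0, hn⟩⟩) r) :=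
  sp_sovereign_pareto_general m M n hn φ hSP hsov
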